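/- arXiv:2008.00427 — 4 statements merged into one kernel-verified Lean document; each statement's English description precedes it below -/
import Mathlib

section
/- Let α be a permutation of {0,…,m−1} with RCISS(α) = (c_1,i_1,…,c_ℓ,i_ℓ). For j = 1,…,ℓ set U_{(c_j,i_j)} := R^B_{s_{j−1}+c_j+i_j} ⋯ R^B_{s_{j−1}+c_j+1} Q^B_{s_{j−1}+c_j} ⋯ Q^B_{s_{j−1}+1} and V_{(c_j,i_j)} := R_{s_{j−1}+1} ⋯ R_{s_{j−1}+c_j} Q_{s_{j−1}+c_j+1} ⋯ Q_{s_{j−1}+c_j+i_j}, and let U(λ) := U_{(c_ℓ,i_ℓ)} U_{(c_{ℓ−1},i_{ℓ−1})} ⋯ U_{(c_1,i_1)} and V(λ) := V_{(c_1,i_1)} V_{(c_2,i_2)} ⋯ V_{(c_ℓ,i_ℓ)}. Then U(λ)(e_1 ⊗ I_n) = Λ_α(λ) and (e_1^T ⊗ I_n)V(λ) = Ω_α(λ). -/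
open Polynomial Matrix
open scoped Classical

set_option synthInstance.maxHeartbeats 1000000
set_option maxHeartbeats 1000000

noncomputable section

namespace RatLin

/-- Block index type for `mn × mn` matrices viewed as `m × m` block matrices
with `n × n` blocks. -/
abbrev BI (m n : ℕ) := Fin m × Fin n

/-- Index type for `(mn + r) × (mn + r)` system matrices; `ρ` indexes the state space. -/
abbrev SI (m n : ℕ) (ρ : Type) := BI m n ⊕ ρ

/-! ### Elementary matrices and Fiedler factors -/

/-- The elementary matrix `M_i(X)`, `-m ≤ i ≤ m-1` (identity outside this range). -/
def elemM (m n : ℕ) (Xm : Matrix (Fin n) (Fin n) ℂ) (i : ℤ) :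
    Matrix (BI m n) (BI m n) ℂ :=
  Matrix.of fun p q =>
    (if i = 0 then
      (if p.1 = q.1 then (if (p.1 : ℕ) = m - 1 then Xm else (1 : Matrix (Fin n) (Fin n) ℂ)) else 0)
    else if i = -(m : ℤ) then
      (if p.1 = q.1 then (if (p.1 : ℕ) = 0 then Xm else 1) else 0)
    else if 0 < i ∧ i < (m : ℤ) then
      (if (p.1 : ℕ) = m - 1 - i.toNat ∧ (q.1 : ℕ) = m - 1 - i.toNat then Xm
       else if (p.1 : ℕ) = m - 1 - i.toNat ∧ (q.1 : ℕ) = m - i.toNat then 1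
       else if (p.1 : ℕ) = m - i.toNat ∧ (q.1 : ℕ) = m - 1 - i.toNat then 1
       else if (p.1 : ℕ) = m - i.toNat ∧ (q.1 : ℕ) = m - i.toNat then 0
       else if p.1 = q.1 then 1 else 0)
    else if -(m : ℤ) < i ∧ i < 0 then
      (if (p.1 : ℕ) = m - 1 - (-i).toNat ∧ (q.1 : ℕ) = m - 1 - (-i).toNat then 0
       else if (p.1 : ℕ) = m - 1 - (-i).toNat ∧ (q.1 : ℕ) = m - (-i).toNat then 1
       else if (p.1 : ℕ) = m - (-i).toNat ∧ (q.1 : ℕ) = m - 1 - (-i).toNat then 1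
       else if (p.1 : ℕ) = m - (-i).toNat ∧ (q.1 : ℕ) = m - (-i).toNat then Xm
       else if p.1 = q.1 then 1 else 0)
    else (if p.1 = q.1 then 1 else 0)) p.2 q.2

/-- The Fiedler matrix `M_i^P` of the matrix polynomial with coefficients `Ac`. -/
def MP (m n : ℕ) (Ac : ℕ → Matrix (Fin n) (Fin n) ℂ) (i : ℤ) :
    Matrix (BI m n) (BI m n) ℂ :=
  if 0 ≤ i then elemM m n (-(Ac i.toNat)) i else elemM m n (Ac (-i).toNat) i

/-- `M_t(Z)`: product of elementary matrices along an index tuple with a matrix assignment. -/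
def elemProd (m n : ℕ) (t : List ℤ) (Z : List (Matrix (Fin n) (Fin n) ℂ)) :
    Matrix (BI m n) (BI m n) ℂ :=
  ((t.zip Z).map fun s => elemM m n s.2 s.1).prod

/-- `M^P_t`: product of Fiedler matrices along an index tuple. -/
def MPprod (m n : ℕ) (Ac : ℕ → Matrix (Fin n) (Fin n) ℂ) (t : List ℤ) :
    Matrix (BI m n) (BI m n) ℂ :=
  (t.map (MP m n Ac)).prod

/-- `e_j ⊗ C` (`j` is a 1-based block index). -/
def eColM (m n : ℕ) {ρ : Type} (j : ℕ) (Cm : Matrix (Fin n) ρ ℂ) : Matrix (BI m n) ρ ℂ :=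
  Matrix.of fun p k => if (p.1 : ℕ) = j - 1 then Cm p.2 k else 0

/-- `e_j^T ⊗ B` (`j` is a 1-based block index). -/
def eRowM (m n : ℕ) {ρ : Type} (j : ℕ) (Bm : Matrix ρ (Fin n) ℂ) : Matrix ρ (BI m n) ℂ :=
  Matrix.of fun k q => if (q.1 : ℕ) = j - 1 then Bm k q.2 else 0

/-- `𝕄_i(X) = diag(M_i(X), I_r)`. -/
def sysElem (m n : ℕ) (ρ : Type) [DecidableEq ρ] [Fintype ρ]
    (Xm : Matrix (Fin n) (Fin n) ℂ) (i : ℤ) : Matrix (SI m n ρ) (SI m n ρ) ℂ :=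
  fromBlocks (elemM m n Xm i) 0 0 1

/-- `𝕄_t(Z)`. -/
def sysElemProd (m n : ℕ) (ρ : Type) [DecidableEq ρ] [Fintype ρ]
    (t : List ℤ) (Z : List (Matrix (Fin n) (Fin n) ℂ)) : Matrix (SI m n ρ) (SI m n ρ) ℂ :=
  ((t.zip Z).map fun s => sysElem m n ρ s.2 s.1).prod

/-- `𝕄^P_i = diag(M^P_i, I_r)`. -/
def sysMP (m n : ℕ) (ρ : Type) [DecidableEq ρ] [Fintype ρ]
    (Ac : ℕ → Matrix (Fin n) (Fin n) ℂ) (i : ℤ) : Matrix (SI m n ρ) (SI m n ρ) ℂ :=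
  fromBlocks (MP m n Ac i) 0 0 1

/-- `𝕄^P_t`. -/
def sysMPprod (m n : ℕ) (ρ : Type) [DecidableEq ρ] [Fintype ρ]
    (Ac : ℕ → Matrix (Fin n) (Fin n) ℂ) (t : List ℤ) : Matrix (SI m n ρ) (SI m n ρ) ℂ :=
  (t.map (sysMP m n ρ Ac)).prod

/-- The Fiedler matrices `𝕄^S_i` of the system matrix
`S(λ) = [[P(λ), C], [B, A - λE]]`. -/
def MS (m n : ℕ) (ρ : Type) [DecidableEq ρ] [Fintype ρ]
    (Ac : ℕ → Matrix (Fin n) (Fin n) ℂ) (Em Am : Matrix ρ ρ ℂ)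
    (Cm : Matrix (Fin n) ρ ℂ) (Bm : Matrix ρ (Fin n) ℂ) (i : ℤ) :
    Matrix (SI m n ρ) (SI m n ρ) ℂ :=
  if i = 0 then fromBlocks (MP m n Ac 0) (-(eColM m n m Cm)) (-(eRowM m n m Bm)) (-Am)
  else if i = -(m : ℤ) then fromBlocks (MP m n Ac i) 0 0 (-Em)
  else fromBlocks (MP m n Ac i) 0 0 1

/-- `𝕄^S_t`. -/
def MSprod (m n : ℕ) (ρ : Type) [DecidableEq ρ] [Fintype ρ]
    (Ac : ℕ → Matrix (Fin n) (Fin n) ℂ) (Em Am : Matrix ρ ρ ℂ)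
    (Cm : Matrix (Fin n) ρ ℂ) (Bm : Matrix ρ (Fin n) ℂ) (t : List ℤ) :
    Matrix (SI m n ρ) (SI m n ρ) ℂ :=
  (t.map (MS m n ρ Ac Em Am Cm Bm)).prod


/-! ### Index-tuple combinatorics -/

/-- The string of integers `(a : b) = (a, a+1, …, b)` (empty if `a > b`). -/
def seg (a b : ℕ) : List ℤ :=
  (List.range (b + 1 - a)).map fun j => ((a + j : ℕ) : ℤ)

/-- The chain `(t, t+1, …, t+p)`. -/
def consecChain (t : ℤ) (p : ℕ) : List ℤ := (List.range (p + 1)).map fun j => t + (j : ℤ)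

/-- The chain `(t+p, …, t+1, t)`. -/
def invChain (t : ℤ) (p : ℕ) : List ℤ := (List.range (p + 1)).map fun j => t + ((p - j : ℕ) : ℤ)

/-- The number `c_t(α)` of consecutive consecutions of `α` at `t` (` = -1` if `t ∉ α`). -/
def cNum (α : List ℤ) (t : ℤ) : ℤ :=
  if t ∈ α then (Nat.findGreatest (fun p => List.Sublist (consecChain t p) α) α.length : ℤ) else -1

/-- The number `i_t(α)` of consecutive inversions of `α` at `t` (` = -1` if `t ∉ α`). -/
def iNum (α : List ℤ) (t : ℤ) : ℤ :=
  if t ∈ α then (Nat.findGreatest (fun p => List.Sublist (invChain t p) α) α.length : ℤ) else -1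

/-- The successor infix property: between any two equal entries there is an
occurrence of the successor index.  (This formulation is invariant under shifts,
so it covers tuples with negative entries as well.) -/
def SIP (α : List ℤ) : Prop :=
  ∀ a b : Fin α.length, a < b → α.get a = α.get b →
    ∃ c : Fin α.length, a < c ∧ c < b ∧ α.get c = α.get a + 1

/-- `α` is (an index tuple that is) a permutation of `{lo, lo+1, …, lo+len-1}`. -/
def PermOn (α : List ℤ) (lo : ℤ) (len : ℕ) : Prop :=
  α.Perm ((List.range len).map fun j => lo + (j : ℤ))

/-- Validity of the data `(h, σ, τ, σ₁, σ₂, τ₁, τ₂)` defining a GFPR for degree `m`. -/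
def ValidGFPR (m h : ℕ) (σ τ σ1 σ2 τ1 τ2 : List ℤ) : Prop :=
  h + 1 ≤ m ∧
  PermOn σ 0 (h + 1) ∧ PermOn τ (-(m : ℤ)) (m - h) ∧
  (∀ x ∈ σ1, 0 ≤ x ∧ x < (h : ℤ)) ∧ (∀ x ∈ σ2, 0 ≤ x ∧ x < (h : ℤ)) ∧
  SIP (σ1 ++ σ ++ σ2) ∧
  (∀ x ∈ τ1, -(m : ℤ) ≤ x ∧ x ≤ -(h : ℤ) - 2) ∧
  (∀ x ∈ τ2, -(m : ℤ) ≤ x ∧ x ≤ -(h : ℤ) - 2) ∧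
  SIP (τ1 ++ τ ++ τ2)

/-- `Z` is a matrix assignment for the index tuple `t`. -/
def AssignLen {n : ℕ} (t : List ℤ) (Z : List (Matrix (Fin n) (Fin n) ℂ)) : Prop :=
  Z.length = t.length

/-- `Z` is a nonsingular matrix assignment for `t` (relative to degree `m`): every matrix
assigned to a position occupied by the index `0` or `-m` is nonsingular. -/
def NonsingAssign (m : ℕ) {n : ℕ} (t : List ℤ) (Z : List (Matrix (Fin n) (Fin n) ℂ)) : Prop :=
  Z.length = t.length ∧ ∀ s ∈ t.zip Z, (s.1 = 0 ∨ s.1 = -(m : ℤ)) → IsUnit s.2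

/-- A matrix assignment consisting of symmetric matrices. -/
def SymmAssign {n : ℕ} (Z : List (Matrix (Fin n) (Fin n) ℂ)) : Prop :=
  ∀ M ∈ Z, Mᵀ = M

/-- Shift every entry of an index tuple by `k`. -/
def shiftZ (t : List ℤ) (k : ℤ) : List ℤ := t.map (· + k)

/-- The admissible tuple `(h-1:h, h-3:h-2, …, p+1:p+2, 0:p)` of `{0,…,h}` with index `p`. -/
def admTuple (h p : ℕ) : List ℤ :=
  ((List.range ((h - p) / 2)).flatMap fun j => seg (h - 1 - 2 * j) (h - 2 * j)) ++ seg 0 p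

/-- `(0:p)_{rev_c} = (0:p-1, 0:p-2, …, 0:1, 0)`. -/
def revC (p : ℕ) : List ℤ := (List.range p).flatMap fun j => seg 0 (p - 1 - j)

/-- The symmetric complement of the admissible tuple of `{0,…,h}` with index `p`. -/
def symComp (h p : ℕ) : List ℤ :=
  ((List.range ((h - p) / 2)).map fun j => ((h - 1 - 2 * j : ℕ) : ℤ)) ++
    (if 1 ≤ p then revC p else [])

/-- The simple admissible tuple of `{0,…,h}` (index `0` for even `h`, `1` for odd `h`). -/
def simpleAdm (h : ℕ) : List ℤ := admTuple h (h % 2)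

/-- The symmetric complement of the simple admissible tuple of `{0,…,h}`. -/
def simpleSymComp (h : ℕ) : List ℤ := symComp h (h % 2)

/-- The tuple `(a_1 : h-2, a_2 : h-4, …, a_{⌊h/2⌋} : h - 2⌊h/2⌋)` in canonical form for `h`. -/
def canonForm (h : ℕ) (a : ℕ → ℕ) : List ℤ :=
  (List.range (h / 2)).flatMap fun j => seg (a (j + 1)) (h - 2 * (j + 1))

/-- `t` is an index tuple in canonical form for `h`. -/
def IsCanonicalForm (h : ℕ) (t : List ℤ) : Prop := ∃ a : ℕ → ℕ, t = canonForm h a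
/-! ### Matrix polynomials, rational matrices and Rosenbrock strong linearizations -/

/-- Embed a complex matrix as a constant matrix polynomial. -/
def cmat {ι κ : Type} (M : Matrix ι κ ℂ) : Matrix ι κ ℂ[X] := M.map Polynomial.C

/-- Embed a complex matrix as a constant rational matrix. -/
def rmat {ι κ : Type} (M : Matrix ι κ ℂ) : Matrix ι κ (RatFunc ℂ) :=
  M.map (algebraMap ℂ (RatFunc ℂ))

/-- Embed a matrix polynomial as a rational matrix. -/
def pmat {ι κ : Type} (M : Matrix ι κ ℂ[X]) : Matrix ι κ (RatFunc ℂ) :=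
  M.map (algebraMap ℂ[X] (RatFunc ℂ))

/-- Evaluation of a matrix polynomial at a point. -/
def evalM {ι κ : Type} (lam : ℂ) (M : Matrix ι κ ℂ[X]) : Matrix ι κ ℂ :=
  M.map (Polynomial.eval lam)

/-- `P(λ) = Σ_{i=0}^m λ^i A_i` as a matrix polynomial. -/
def polyPartC (m n : ℕ) (Ac : ℕ → Matrix (Fin n) (Fin n) ℂ) : Matrix (Fin n) (Fin n) ℂ[X] :=
  ∑ i ∈ Finset.range (m + 1), (X : ℂ[X]) ^ i • cmat (Ac i)

/-- `P(λ)` as a rational matrix. -/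
def polyPartR (m n : ℕ) (Ac : ℕ → Matrix (Fin n) (Fin n) ℂ) :
    Matrix (Fin n) (Fin n) (RatFunc ℂ) :=
  ∑ i ∈ Finset.range (m + 1), (RatFunc.X : RatFunc ℂ) ^ i • rmat (Ac i)

/-- The rational matrix `G(λ) = P(λ) + C (λE - A)⁻¹ B`. -/
def Gtransfer (m n : ℕ) (ρ : Type) [Fintype ρ] [DecidableEq ρ]
    (Ac : ℕ → Matrix (Fin n) (Fin n) ℂ) (Em Am : Matrix ρ ρ ℂ)
    (Cm : Matrix (Fin n) ρ ℂ) (Bm : Matrix ρ (Fin n) ℂ) :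
    Matrix (Fin n) (Fin n) (RatFunc ℂ) :=
  polyPartR m n Ac + rmat Cm * ((RatFunc.X : RatFunc ℂ) • rmat Em - rmat Am)⁻¹ * rmat Bm

/-- Pointwise evaluation of `G(λ) = P(λ) + C (λE - A)⁻¹ B`. -/
def Gpt (m n : ℕ) {ρ : Type} [Fintype ρ] [DecidableEq ρ]
    (Ac : ℕ → Matrix (Fin n) (Fin n) ℂ) (Em Am : Matrix ρ ρ ℂ)
    (Cm : Matrix (Fin n) ρ ℂ) (Bm : Matrix ρ (Fin n) ℂ) (lam : ℂ) :
    Matrix (Fin n) (Fin n) ℂ :=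
  (∑ i ∈ Finset.range (m + 1), lam ^ i • Ac i) + Cm * (lam • Em - Am)⁻¹ * Bm

/-- A scalar rational function is proper if its numerator degree does not
exceed its denominator degree. -/
def Proper (f : RatFunc ℂ) : Prop := f.num.degree ≤ f.denom.degree

/-- The value of a proper rational function at infinity. -/
def atInf (f : RatFunc ℂ) : ℂ :=
  if f.num.degree = f.denom.degree then f.num.leadingCoeff / f.denom.leadingCoeff else 0

/-- A biproper rational matrix: proper with nonsingular value at infinity. -/
def Biproper {ι : Type} [Fintype ι] [DecidableEq ι] (O : Matrix ι ι (RatFunc ℂ)) : Prop :=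
  (∀ i j, Proper (O i j)) ∧ IsUnit (Matrix.of fun i j => atInf (O i j))

/-- `diag(I_{(m-1)n}, W)` with `W` occupying the last diagonal block (polynomial entries). -/
def diagLastP (m n : ℕ) (W : Matrix (Fin n) (Fin n) ℂ[X]) : Matrix (BI m n) (BI m n) ℂ[X] :=
  Matrix.of fun p q =>
    if (p.1 : ℕ) = m - 1 ∧ (q.1 : ℕ) = m - 1 then W p.2 q.2
    else if p = q then 1 else 0

/-- `diag(I_{(m-1)n}, W)` with `W` occupying the last diagonal block (rational entries). -/
def diagLastR (m n : ℕ) (W : Matrix (Fin n) (Fin n) (RatFunc ℂ)) :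
    Matrix (BI m n) (BI m n) (RatFunc ℂ) :=
  Matrix.of fun p q =>
    if (p.1 : ℕ) = m - 1 ∧ (q.1 : ℕ) = m - 1 then W p.2 q.2
    else if p = q then 1 else 0

/-- The system matrix `S(λ) = [[P(λ), C], [B, A - λE]]` (size `(n+r) × (n+r)`). -/
def sysS (m n : ℕ) (ρ : Type) (Ac : ℕ → Matrix (Fin n) (Fin n) ℂ)
    (Em Am : Matrix ρ ρ ℂ) (Cm : Matrix (Fin n) ρ ℂ) (Bm : Matrix ρ (Fin n) ℂ) :
    Matrix (Fin n ⊕ ρ) (Fin n ⊕ ρ) ℂ[X] :=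
  fromBlocks (polyPartC m n Ac) (cmat Cm) (cmat Bm) (cmat Am - (X : ℂ[X]) • cmat Em)

/-- `diag(I_{(m-1)n}, S(λ))` with `S(λ)` occupying the trailing `(n+r) × (n+r)` corner. -/
def sysDiagIS (m n : ℕ) (ρ : Type) (Ac : ℕ → Matrix (Fin n) (Fin n) ℂ)
    (Em Am : Matrix ρ ρ ℂ) (Cm : Matrix (Fin n) ρ ℂ) (Bm : Matrix ρ (Fin n) ℂ) :
    Matrix (SI m n ρ) (SI m n ρ) ℂ[X] :=
  fromBlocks (diagLastP m n (polyPartC m n Ac))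
    (Matrix.of fun p k => if (p.1 : ℕ) = m - 1 then Polynomial.C (Cm p.2 k) else 0)
    (Matrix.of fun k q => if (q.1 : ℕ) = m - 1 then Polynomial.C (Bm k q.2) else 0)
    (cmat Am - (X : ℂ[X]) • cmat Em)

/-- Minimality (equivalently, irreducibility) of the realization
`G(λ) = P(λ) + C (λE - A)⁻¹ B`. -/
def MinimalReal (n : ℕ) (ρ : Type) [Fintype ρ] [DecidableEq ρ]
    (Em Am : Matrix ρ ρ ℂ) (Cm : Matrix (Fin n) ρ ℂ) (Bm : Matrix ρ (Fin n) ℂ) : Prop :=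
  ∀ lam : ℂ, (Matrix.fromCols Bm (Am - lam • Em)).rank = Fintype.card ρ ∧
    (Matrix.fromRows Cm (Am - lam • Em)).rank = Fintype.card ρ

/-- `L` is a Rosenbrock strong linearization of
`G(λ) = P(λ) + C (λE - A)⁻¹ B` (Definition 2.4 of the paper). -/
def IsRosenbrock (m n : ℕ) (ρ : Type) [Fintype ρ] [DecidableEq ρ]
    (Ac : ℕ → Matrix (Fin n) (Fin n) ℂ) (Em Am : Matrix ρ ρ ℂ)
    (Cm : Matrix (Fin n) ρ ℂ) (Bm : Matrix ρ (Fin n) ℂ)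
    (L : Matrix (SI m n ρ) (SI m n ρ) ℂ[X]) : Prop :=
  ∃ (Xc Yc : Matrix (BI m n) (BI m n) ℂ) (Cc : Matrix (BI m n) ρ ℂ)
    (Bc : Matrix ρ (BI m n) ℂ) (H K : Matrix ρ ρ ℂ),
    -- `L(λ) = [[𝒳 - λ𝒴, 𝒞], [ℬ, H - λK]]` with `K` nonsingular
    IsUnit K ∧
    L = fromBlocks (cmat Xc - (X : ℂ[X]) • cmat Yc) (cmat Cc) (cmat Bc)
          (cmat H - (X : ℂ[X]) • cmat K) ∧
    -- `L` is an irreducible system matrix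
    (∀ lam : ℂ, (Matrix.fromCols Bc (H - lam • K)).rank = Fintype.card ρ ∧
      (Matrix.fromRows Cc (H - lam • K)).rank = Fintype.card ρ) ∧
    -- condition (a): unimodular equivalence to `diag(I_{(m-1)n}, S(λ))`
    (∃ (U V : Matrix (BI m n) (BI m n) ℂ[X]) (U0 V0 : Matrix ρ ρ ℂ),
      IsUnit U.det ∧ IsUnit V.det ∧ IsUnit U0 ∧ IsUnit V0 ∧
      fromBlocks U 0 0 (cmat U0) * L * fromBlocks V 0 0 (cmat V0) =
        sysDiagIS m n ρ Ac Em Am Cm Bm) ∧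
    -- condition (b): biproper equivalence of `λ⁻¹𝔾(λ)` to `diag(I_{(m-1)n}, λ^{-m}G(λ))`
    (∃ Ol Or : Matrix (BI m n) (BI m n) (RatFunc ℂ),
      Biproper Ol ∧ Biproper Or ∧
      Ol * ((RatFunc.X : RatFunc ℂ)⁻¹ •
          (rmat Xc - (RatFunc.X : RatFunc ℂ) • rmat Yc +
            rmat Cc * ((RatFunc.X : RatFunc ℂ) • rmat K - rmat H)⁻¹ * rmat Bc)) * Or =
        diagLastR m n (((RatFunc.X : RatFunc ℂ) ^ m)⁻¹ • Gtransfer m n ρ Ac Em Am Cm Bm))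
/-! ### GFPR pencils -/

/-- The GFPR `L(λ) = M_{(τ₁,σ₁)}(Y₁,X₁) (λ M^P_τ - M^P_σ) M_{(σ₂,τ₂)}(X₂,Y₂)` of `P(λ)`. -/
def gfprP (m n : ℕ) (Ac : ℕ → Matrix (Fin n) (Fin n) ℂ)
    (σ τ σ1 σ2 τ1 τ2 : List ℤ) (X1 X2 Y1 Y2 : List (Matrix (Fin n) (Fin n) ℂ)) :
    Matrix (BI m n) (BI m n) ℂ[X] :=
  cmat (elemProd m n (τ1 ++ σ1) (Y1 ++ X1)) *
    ((X : ℂ[X]) • cmat (MPprod m n Ac τ) - cmat (MPprod m n Ac σ)) *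
    cmat (elemProd m n (σ2 ++ τ2) (X2 ++ Y2))

/-- The GFPR `𝕃(λ) = 𝕄_{(τ₁,σ₁)}(Y₁,X₁) (λ 𝕄^S_τ - 𝕄^S_σ) 𝕄_{(σ₂,τ₂)}(X₂,Y₂)` of `G(λ)`. -/
def gfprG (m n : ℕ) (ρ : Type) [Fintype ρ] [DecidableEq ρ]
    (Ac : ℕ → Matrix (Fin n) (Fin n) ℂ) (Em Am : Matrix ρ ρ ℂ)
    (Cm : Matrix (Fin n) ρ ℂ) (Bm : Matrix ρ (Fin n) ℂ)
    (σ τ σ1 σ2 τ1 τ2 : List ℤ) (X1 X2 Y1 Y2 : List (Matrix (Fin n) (Fin n) ℂ)) :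
    Matrix (SI m n ρ) (SI m n ρ) ℂ[X] :=
  cmat (sysElemProd m n ρ (τ1 ++ σ1) (Y1 ++ X1)) *
    ((X : ℂ[X]) • cmat (MSprod m n ρ Ac Em Am Cm Bm τ) - cmat (MSprod m n ρ Ac Em Am Cm Bm σ)) *
    cmat (sysElemProd m n ρ (σ2 ++ τ2) (X2 ++ Y2))

/-- `L` belongs to the family of GFPRs of `P(λ)`. -/
def IsGFPRofP (m n : ℕ) (Ac : ℕ → Matrix (Fin n) (Fin n) ℂ)
    (L : Matrix (BI m n) (BI m n) ℂ[X]) : Prop :=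
  ∃ (h : ℕ) (σ τ σ1 σ2 τ1 τ2 : List ℤ) (X1 X2 Y1 Y2 : List (Matrix (Fin n) (Fin n) ℂ)),
    ValidGFPR m h σ τ σ1 σ2 τ1 τ2 ∧
    AssignLen σ1 X1 ∧ AssignLen σ2 X2 ∧ AssignLen τ1 Y1 ∧ AssignLen τ2 Y2 ∧
    L = gfprP m n Ac σ τ σ1 σ2 τ1 τ2 X1 X2 Y1 Y2

/-- `LL` belongs to the family of GFPRs of `G(λ)`. -/
def IsGFPRofG (m n : ℕ) (ρ : Type) [Fintype ρ] [DecidableEq ρ]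
    (Ac : ℕ → Matrix (Fin n) (Fin n) ℂ) (Em Am : Matrix ρ ρ ℂ)
    (Cm : Matrix (Fin n) ρ ℂ) (Bm : Matrix ρ (Fin n) ℂ)
    (LL : Matrix (SI m n ρ) (SI m n ρ) ℂ[X]) : Prop :=
  ∃ (h : ℕ) (σ τ σ1 σ2 τ1 τ2 : List ℤ) (X1 X2 Y1 Y2 : List (Matrix (Fin n) (Fin n) ℂ)),
    ValidGFPR m h σ τ σ1 σ2 τ1 τ2 ∧
    AssignLen σ1 X1 ∧ AssignLen σ2 X2 ∧ AssignLen τ1 Y1 ∧ AssignLen τ2 Y2 ∧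
    LL = gfprG m n ρ Ac Em Am Cm Bm σ τ σ1 σ2 τ1 τ2 X1 X2 Y1 Y2

/-! ### Structured pencils -/

/-- Pointwise `T`-even: `R(-λ)ᵀ = R(λ)`. -/
def TEvenP {ι : Type} (M : Matrix ι ι ℂ[X]) : Prop :=
  ∀ lam : ℂ, (evalM (-lam) M)ᵀ = evalM lam M

/-- Pointwise `T`-odd: `R(-λ)ᵀ = -R(λ)`. -/
def TOddP {ι : Type} (M : Matrix ι ι ℂ[X]) : Prop :=
  ∀ lam : ℂ, (evalM (-lam) M)ᵀ = -(evalM lam M)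

/-- A quasi-identity matrix `ε₁ I_n ⊕ ⋯ ⊕ ε_m I_n`. -/
def quasiId (m n : ℕ) (ε : Fin m → ℂ) : Matrix (BI m n) (BI m n) ℂ :=
  Matrix.of fun p q => if p = q then ε p.1 else 0

/-- The parameters of a quasi-identity matrix are signs. -/
def IsSign {m : ℕ} (ε : Fin m → ℂ) : Prop := ∀ i, ε i = 1 ∨ ε i = -1

/-- `diag(Q, I_r)` for a quasi-identity matrix `Q`, as a constant matrix polynomial. -/
def sysQuasi (m n : ℕ) (ρ : Type) [DecidableEq ρ] (ε : Fin m → ℂ) :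
    Matrix (SI m n ρ) (SI m n ρ) ℂ[X] :=
  fromBlocks (cmat (quasiId m n ε)) 0 0 1

/-- `J = [[0, I_ℓ], [-I_ℓ, 0]]`. -/
def Jmat (l : ℕ) : Matrix (Fin l ⊕ Fin l) (Fin l ⊕ Fin l) ℂ :=
  fromBlocks 0 1 (-1) 0

/-- `𝕁_{mn,r} = diag(I_{mn}, J)` as a constant matrix polynomial. -/
def sysJ (m n l : ℕ) : Matrix (SI m n (Fin l ⊕ Fin l)) (SI m n (Fin l ⊕ Fin l)) ℂ[X] :=
  fromBlocks 1 0 0 (cmat (Jmat l))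

/-- Block symmetry of a system pencil `[[A, u ⊗ X'], [vᵀ ⊗ Y', Z']]`:
the leading block matrix is block symmetric and `u = v`. -/
def IsBlockSymSys (m n : ℕ) (ρ : Type) (Amat : Matrix (SI m n ρ) (SI m n ρ) ℂ[X]) : Prop :=
  (∀ p q : BI m n, Amat (Sum.inl p) (Sum.inl q) = Amat (Sum.inl (q.1, p.2)) (Sum.inl (p.1, q.2))) ∧
  ∃ (u : Fin m → ℂ[X]) (Xc : Matrix (Fin n) ρ ℂ[X]) (Yc : Matrix ρ (Fin n) ℂ[X]),
    (∀ p k, Amat (Sum.inl p) (Sum.inr k) = u p.1 * Xc p.2 k) ∧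
    (∀ k q, Amat (Sum.inr k) (Sum.inl q) = u q.1 * Yc k q.2)

/-! ### Null space bases -/

/-- The columns of `Z` form a basis of the right null space of `M`. -/
def ColBasisRight {ι κ : Type} [Fintype ι] [Fintype κ] [DecidableEq ι] [DecidableEq κ]
    (M : Matrix ι ι ℂ) (Z : Matrix ι κ ℂ) : Prop :=
  M * Z = 0 ∧ Z.rank = Fintype.card κ ∧
    ∀ v : ι → ℂ, M *ᵥ v = 0 → ∃ c : κ → ℂ, v = Z *ᵥ c

/-- The columns of `Z` form a basis of the left null space of `M`. -/
def ColBasisLeft {ι κ : Type} [Fintype ι] [Fintype κ] [DecidableEq ι] [DecidableEq κ]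
    (M : Matrix ι ι ℂ) (Z : Matrix ι κ ℂ) : Prop :=
  (∀ j : κ, Matrix.vecMul (fun i => Z i j) M = 0) ∧ Z.rank = Fintype.card κ ∧
    ∀ v : ι → ℂ, Matrix.vecMul v M = 0 → ∃ c : κ → ℂ, v = Z *ᵥ c

/-! ### Type-1 right index tuples (via column standard forms) -/

/-- One commutation step: adjacent entries whose absolute difference exceeds `1` commute. -/
def SwapStep (s t : List ℤ) : Prop :=
  ∃ (l1 l2 : List ℤ) (x y : ℤ), 1 < |x - y| ∧
    s = l1 ++ x :: y :: l2 ∧ t = l1 ++ y :: x :: l2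

/-- Equivalence of index tuples generated by commutation of distant indices. -/
def TupleEquiv : List ℤ → List ℤ → Prop := Relation.EqvGen SwapStep

/-- The tuple in column standard form determined by the ascending breakpoint
list `bp = [a₁, …, a_d]`: `(a_{d-1}+1 : a_d, …, a₁+1 : a₂, 0 : a₁)`. -/
def breaksTuple (bp : List ℕ) : List ℤ :=
  (List.range bp.length).reverse.flatMap fun j =>
    seg (if j = 0 then 0 else bp.getD (j - 1) 0 + 1) (bp.getD j 0)

/-- `bp` is a valid breakpoint list for a permutation of `{0, …, k}`. -/
def IsBreaks (k : ℕ) (bp : List ℕ) : Prop :=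
  bp.Chain' (· < ·) ∧ bp.getLast? = some k

/-- `bp` gives the column standard form of the index tuple `α` (a permutation of `{0,…,k}`). -/
def CsfBreaks (k : ℕ) (α : List ℤ) (bp : List ℕ) : Prop :=
  IsBreaks k bp ∧ TupleEquiv α (breaksTuple bp)

/-- `s` is a right index of type-1 relative to the csf with breakpoints `bp`. -/
def IsRT1 (bp : List ℕ) (s : ℕ) : Prop :=
  (s = 0 ∧ 0 ∉ bp) ∨ (s ≠ 0 ∧ (s - 1) ∈ bp ∧ s ∉ bp)

/-- Breakpoints of the simple tuple `z_r(α, s)` associated with `(α, s)`. -/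
def zrNext (bp : List ℕ) (s : ℕ) : List ℕ :=
  if s = 0 then 0 :: bp else bp.map fun a => if a = s - 1 then s else a

/-- Iterated validity of a tuple of right indices of type-1. -/
def RT1Chain : List ℕ → List ℕ → Prop
  | _, [] => True
  | bp, s :: rest => IsRT1 bp s ∧ RT1Chain (zrNext bp s) rest

/-- `t` is a right index tuple of type-1 relative to the permutation `α` of `{0, …, k}`. -/
def IsRightT1Tuple (k : ℕ) (α : List ℤ) (t : List ℤ) : Prop :=
  ∃ (bp : List ℕ) (tn : List ℕ), CsfBreaks k α bp ∧
    t = tn.map (fun j => (j : ℤ)) ∧ RT1Chain bp tn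
/-! ### RCISS, the matrices `Λ_α`, `Ω_α`, and the unimodular factors `Q_i`, `R_i` -/

/-- `α` has a consecution at `j` (i.e. `j` occurs before `j+1` in `α`). -/
def hasConsec (α : List ℤ) (j : ℕ) : Prop :=
  α.idxOf ((j : ℕ) : ℤ) < α.idxOf (((j : ℕ) : ℤ) + 1)

/-- Whether position `t` (counted from the top, i.e. `t = m - 2 - j`) is a consecution
position of the pattern `(c₁, i₁, c₂, i₂, …)`. -/
def patConsec : List (ℕ × ℕ) → ℕ → Prop
  | [], _ => False
  | (c, i) :: rest, t => t < c ∨ (c + i ≤ t ∧ patConsec rest (t - (c + i)))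

/-- `RCISS(α) = (c₁, i₁, …, c_ℓ, i_ℓ)`: the reverse consecution-inversion structure
sequence of the permutation `α` of `{0, …, m-1}`. -/
def IsRCISS (m : ℕ) (α : List ℤ) (L : List (ℕ × ℕ)) : Prop :=
  ((L.map fun s => s.1 + s.2).sum = m - 1) ∧
  ∀ j : ℕ, j + 1 < m → (hasConsec α j ↔ patConsec L (m - 2 - j))

/-- The exponent (if any) of the block in row `p` of `Λ_α` (built from the RCISS pattern). -/
def lamExp : List (ℕ × ℕ) → ℕ → ℕ → Option ℕ
  | [], _, _ => none
  | [(c, i)], acc, p =>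
      if p < c then some (acc + p) else if p = c + i then some (acc + c) else none
  | (c, i) :: rest, acc, p =>
      if p < c then some (acc + p)
      else if p < c + i then none
      else lamExp rest (acc + c) (p - (c + i))

/-- The exponent (if any) of the block in column `q` of `Ω_α`. -/
def omExp : List (ℕ × ℕ) → ℕ → ℕ → Option ℕ
  | [], _, _ => none
  | [(c, i)], acc, p =>
      if p < c then none
      else if p < c + i then some (acc + (p - c))
      else if p = c + i then some (acc + i) else none
  | (c, i) :: rest, acc, p =>
      if p < c then none
      else if p < c + i then some (acc + (p - c))
      else omExp rest (acc + i) (p - (c + i))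

/-- The `mn × n` matrix polynomial `Λ_α(λ)`. -/
def LamMat (m n : ℕ) (L : List (ℕ × ℕ)) : Matrix (BI m n) (Fin n) ℂ[X] :=
  Matrix.of fun p b =>
    match lamExp L 0 (p.1 : ℕ) with
    | some e => if p.2 = b then (X : ℂ[X]) ^ e else 0
    | none => 0

/-- The `n × mn` matrix polynomial `Ω_α(λ)`. -/
def OmMat (m n : ℕ) (L : List (ℕ × ℕ)) : Matrix (Fin n) (BI m n) ℂ[X] :=
  Matrix.of fun a q =>
    match omExp L 0 (q.1 : ℕ) with
    | some e => if a = q.2 then (X : ℂ[X]) ^ e else 0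
    | none => 0

/-- `e₁ ⊗ I_n` as an `mn × n` matrix polynomial. -/
def e1ColI (m n : ℕ) : Matrix (BI m n) (Fin n) ℂ[X] :=
  Matrix.of fun p b => if (p.1 : ℕ) = 0 ∧ p.2 = b then 1 else 0

/-- `e₁ᵀ ⊗ I_n` as an `n × mn` matrix polynomial. -/
def e1RowI (m n : ℕ) : Matrix (Fin n) (BI m n) ℂ[X] :=
  Matrix.of fun a q => if (q.1 : ℕ) = 0 ∧ a = q.2 then 1 else 0

/-- The Horner shift `P_k(λ) = A_{m-k} + λ A_{m-k+1} + ⋯ + λ^k A_m`. -/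
def horner (m n : ℕ) (Ac : ℕ → Matrix (Fin n) (Fin n) ℂ) (k : ℕ) :
    Matrix (Fin n) (Fin n) ℂ[X] :=
  ∑ j ∈ Finset.range (k + 1), (X : ℂ[X]) ^ j • cmat (Ac (m - k + j))

/-- The unimodular matrix polynomial `Q_i(λ)` (`1 ≤ i ≤ m-1`, 1-based block index). -/
def Qmat (m n : ℕ) (i : ℕ) : Matrix (BI m n) (BI m n) ℂ[X] :=
  Matrix.of fun p q =>
    if p.1 = q.1 then (if p.2 = q.2 then 1 else 0)
    else if (p.1 : ℕ) = i - 1 ∧ (q.1 : ℕ) = i then (if p.2 = q.2 then (X : ℂ[X]) else 0)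
    else 0

/-- The block transpose `Q_i(λ)^B`. -/
def QBmat (m n : ℕ) (i : ℕ) : Matrix (BI m n) (BI m n) ℂ[X] :=
  Matrix.of fun p q =>
    if p.1 = q.1 then (if p.2 = q.2 then 1 else 0)
    else if (p.1 : ℕ) = i ∧ (q.1 : ℕ) = i - 1 then (if p.2 = q.2 then (X : ℂ[X]) else 0)
    else 0

/-- The unimodular matrix polynomial `R_i(λ)` (block symmetric: `R_i^B = R_i`). -/
def Rmat (m n : ℕ) (Ac : ℕ → Matrix (Fin n) (Fin n) ℂ) (i : ℕ) :
    Matrix (BI m n) (BI m n) ℂ[X] :=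
  Matrix.of fun p q =>
    if (p.1 : ℕ) = i - 1 ∧ (q.1 : ℕ) = i - 1 then 0
    else if (p.1 : ℕ) = i - 1 ∧ (q.1 : ℕ) = i then (if p.2 = q.2 then 1 else 0)
    else if (p.1 : ℕ) = i ∧ (q.1 : ℕ) = i - 1 then (if p.2 = q.2 then 1 else 0)
    else if (p.1 : ℕ) = i ∧ (q.1 : ℕ) = i then horner m n Ac i p.2 q.2
    else if p.1 = q.1 ∧ p.2 = q.2 then 1 else 0

/-- `U_{(c,i)} = R^B_{s+c+i} ⋯ R^B_{s+c+1} Q^B_{s+c} ⋯ Q^B_{s+1}`. -/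
def Ufac (m n : ℕ) (Ac : ℕ → Matrix (Fin n) (Fin n) ℂ) (s c i : ℕ) :
    Matrix (BI m n) (BI m n) ℂ[X] :=
  (((List.range i).map fun t => Rmat m n Ac (s + c + i - t)).prod) *
    (((List.range c).map fun t => QBmat m n (s + c - t)).prod)

/-- `V_{(c,i)} = R_{s+1} ⋯ R_{s+c} Q_{s+c+1} ⋯ Q_{s+c+i}`. -/
def Vfac (m n : ℕ) (Ac : ℕ → Matrix (Fin n) (Fin n) ℂ) (s c i : ℕ) :
    Matrix (BI m n) (BI m n) ℂ[X] :=
  (((List.range c).map fun t => Rmat m n Ac (s + 1 + t)).prod) *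
    (((List.range i).map fun t => Qmat m n (s + c + 1 + t)).prod)

/-- `U(λ) = U_{(c_ℓ,i_ℓ)} ⋯ U_{(c₁,i₁)}` (with running partial sums `s_{j-1}`). -/
def Uprod (m n : ℕ) (Ac : ℕ → Matrix (Fin n) (Fin n) ℂ) :
    List (ℕ × ℕ) → ℕ → Matrix (BI m n) (BI m n) ℂ[X]
  | [], _ => 1
  | (c, i) :: rest, s => Uprod m n Ac rest (s + c + i) * Ufac m n Ac s c i

/-- `V(λ) = V_{(c₁,i₁)} ⋯ V_{(c_ℓ,i_ℓ)}`. -/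
def Vprod (m n : ℕ) (Ac : ℕ → Matrix (Fin n) (Fin n) ℂ) :
    List (ℕ × ℕ) → ℕ → Matrix (BI m n) (BI m n) ℂ[X]
  | [], _ => 1
  | (c, i) :: rest, s => Vfac m n Ac s c i * Vprod m n Ac rest (s + c + i)

/-- Block lower triangular with identity diagonal blocks. -/
def BlockLowerUni (m n : ℕ) (L : Matrix (BI m n) (BI m n) ℂ[X]) : Prop :=
  (∀ p q : BI m n, p.1 < q.1 → L p q = 0) ∧
  (∀ p q : BI m n, p.1 = q.1 → L p q = if p.2 = q.2 then 1 else 0)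

/-- Block upper triangular with identity diagonal blocks. -/
def BlockUpperUni (m n : ℕ) (U : Matrix (BI m n) (BI m n) ℂ[X]) : Prop :=
  (∀ p q : BI m n, q.1 < p.1 → U p q = 0) ∧
  (∀ p q : BI m n, p.1 = q.1 → U p q = if p.2 = q.2 then 1 else 0)

/-- `diag(I_{(m-1)n}, 0_n)`. -/
def diagZeroLast (m n : ℕ) : Matrix (BI m n) (BI m n) ℂ[X] :=
  Matrix.of fun p q => if p = q ∧ (p.1 : ℕ) ≠ m - 1 then 1 else 0

/-! Each factor acts on a block column whose blocks are monomials `λ^e I_n` or `0` by an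
operation on the exponent profile: `Q_j^B` fills the zero block `j` with `λ` times block
`j-1`, and `R_j` swaps the blocks `j-1` and `j` when block `j` is zero (so the Horner block
`P_j` never contributes). Starting from `e₁ ⊗ I_n`, the factor `U_{(c,i)}` spreads the current
monomial `λ^e` over the next `c` blocks and then moves `λ^{e+c}` down by `i` blocks, which is
the recursion defining `Λ_α`. Since `Q_jᵀ = Q_j^B` and `R_jᵀ` is `R_j` for the transposed
coefficients, `V(λ)ᵀ` acts in the same way with the two moves in the opposite order, and
produces `Ω_αᵀ`. -/

lemma sum_fin_eq_of_eq_ite {m : ℕ} {R : Type*} [AddCommMonoid R] {f : Fin m → R} {σ : ℕ}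
    {c : R} (hσ : σ < m) (h : ∀ k : Fin m, f k = if (k : ℕ) = σ then c else 0) :
    ∑ k, f k = c := by
  rw [Fintype.sum_eq_single ⟨σ, hσ⟩ fun k hk => by rw [h, if_neg (fun e => hk (Fin.ext e))]]
  simp [h]

lemma transpose_prod_map_range {ι R : Type*} [Fintype ι] [DecidableEq ι] [CommSemiring R]
    (f : ℕ → Matrix ι ι R) (a c : ℕ) :
    ((List.range c).map fun t => f (a + 1 + t)).prodᵀ =
      ((List.range c).map fun t => (f (a + c - t))ᵀ).prod := by
  induction c generalizing a with
  | zero => simp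
  | succ c ih =>
    conv_lhs => rw [List.range_succ, List.map_append, List.prod_append, transpose_mul,
      List.map_singleton, List.prod_singleton, ih]
    rw [List.range_succ_eq_map, List.map_cons, List.prod_cons, List.map_map]
    congr 3
    · omega
    · funext t
      simp only [Function.comp_apply]
      congr 2
      omega

/- `lamExp` and `omExp` give junk (`none`) on the empty pattern; extending them by the profile
of `e₁ ⊗ I_n` makes the recursion over the pattern uniform. -/
def lamProfile (L : List (ℕ × ℕ)) (acc p : ℕ) : Option ℕ :=
  if L = [] then (if p = 0 then some acc else none) else lamExp L acc p

def omProfile (L : List (ℕ × ℕ)) (acc p : ℕ) : Option ℕ :=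
  if L = [] then (if p = 0 then some acc else none) else omExp L acc p

lemma lamProfile_cons (c i : ℕ) (L : List (ℕ × ℕ)) (acc p : ℕ) :
    lamProfile ((c, i) :: L) acc p =
      if p < c then some (acc + p) else if p < c + i then none
      else lamProfile L (acc + c) (p - (c + i)) := by
  cases L with
  | nil =>
    simp only [lamProfile, lamExp, reduceCtorEq, if_true, if_false]
    split_ifs <;> first | rfl | omega
  | cons d L => simp [lamProfile, lamExp]

lemma omProfile_cons (c i : ℕ) (L : List (ℕ × ℕ)) (acc p : ℕ) :
    omProfile ((c, i) :: L) acc p =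
      if p < c then none else if p < c + i then some (acc + (p - c))
      else omProfile L (acc + i) (p - (c + i)) := by
  cases L with
  | nil =>
    simp only [omProfile, omExp, reduceCtorEq, if_true, if_false]
    split_ifs <;> first | rfl | omega
  | cons d L => simp [omProfile, omExp]

section

variable (m n : ℕ) (Ac : ℕ → Matrix (Fin n) (Fin n) ℂ)

def powCol (g : ℕ → Option ℕ) : Matrix (BI m n) (Fin n) ℂ[X] :=
  Matrix.of fun p b => if p.2 = b then (g p.1).elim 0 (X ^ ·) else 0

lemma mul_powCol_apply (M : Matrix (BI m n) (BI m n) ℂ[X]) (g : ℕ → Option ℕ)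
    (p : BI m n) (b : Fin n) :
    (M * powCol m n g) p b = ∑ k : Fin m, M p (k, b) * (g k).elim 0 (X ^ ·) := by
  simp [Matrix.mul_apply, Fintype.sum_prod_type, powCol, mul_ite]

lemma QBmat_mul_powCol {j : ℕ} (hj : 1 ≤ j) {g : ℕ → Option ℕ} (hg : g j = none) :
    QBmat m n j * powCol m n g =
      powCol m n (Function.update g j ((g (j - 1)).map (· + 1))) := by
  refine Matrix.ext fun ⟨⟨a, ha⟩, a2⟩ b => ?_
  rw [mul_powCol_apply]
  simp only [QBmat, powCol, of_apply, Function.update_apply, Fin.ext_iff (n := m)]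
  by_cases haj : a = j
  · rw [sum_fin_eq_of_eq_ite (σ := j - 1)
      (c := if a2 = b then X * (g (j - 1)).elim 0 (X ^ ·) else 0) (by omega) fun k => by
        generalize (k : ℕ) = k
        split_ifs <;> first | (exfalso; omega) | (subst_vars; simp_all)]
    cases g (j - 1) <;> simp [haj, pow_succ']
  · rw [sum_fin_eq_of_eq_ite (σ := a) (c := if a2 = b then (g a).elim 0 (X ^ ·) else 0) ha
      fun k => by
        generalize (k : ℕ) = k
        split_ifs <;> first | (exfalso; omega) | (subst_vars; simp_all)]
    simp [haj]

lemma Rmat_mul_powCol {j : ℕ} (hj : 1 ≤ j) {g : ℕ → Option ℕ} (hg : g j = none) :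
    Rmat m n Ac j * powCol m n g = powCol m n (g ∘ Equiv.swap (j - 1) j) := by
  refine Matrix.ext fun ⟨⟨a, ha⟩, a2⟩ b => ?_
  rw [mul_powCol_apply]
  simp only [Rmat, powCol, of_apply, Function.comp_apply, Equiv.swap_apply_def,
    Fin.ext_iff (n := m)]
  by_cases haj : a = j - 1
  · rw [Finset.sum_eq_zero fun k _ => by
      generalize (k : ℕ) = k
      split_ifs <;> first | (exfalso; omega) | (subst_vars; simp_all)]
    simp [haj, hg]
  · rw [sum_fin_eq_of_eq_ite (σ := if a = j then j - 1 else a)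
      (c := if a2 = b then (g (if a = j then j - 1 else a)).elim 0 (X ^ ·) else 0)
      (by split_ifs <;> omega) fun k => by
        generalize (k : ℕ) = k
        split_ifs <;> first | (exfalso; omega) | (subst_vars; simp_all)]
    simp [haj]

lemma Qmat_transpose (j : ℕ) : (Qmat m n j)ᵀ = QBmat m n j := by
  ext p q
  simp only [transpose_apply, Qmat, QBmat, of_apply, eq_comm (a := q.1), eq_comm (a := q.2)]
  split_ifs <;> first | rfl | (exfalso; tauto)

lemma horner_transpose (k : ℕ) : (horner m n Ac k)ᵀ = horner m n (fun t => (Ac t)ᵀ) k := by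
  simp [horner, transpose_sum, transpose_smul, cmat, transpose_map]

lemma Rmat_transpose (j : ℕ) : (Rmat m n Ac j)ᵀ = Rmat m n (fun t => (Ac t)ᵀ) j := by
  ext p q
  simp only [transpose_apply, Rmat, of_apply, ← horner_transpose, eq_comm (a := q.2)]
  split_ifs <;> first | rfl | (exfalso; omega)

lemma prod_QBmat_mul_powCol (s c e : ℕ) {g : ℕ → Option ℕ}
    (hg : ∀ t, s ≤ t → g t = if t = s then some e else none) :
    ((List.range c).map fun t => QBmat m n (s + c - t)).prod * powCol m n g =
      powCol m n fun t => if t < s then g t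
        else if t ≤ s + c then some (e + (t - s)) else none := by
  induction c with
  | zero =>
    rw [List.range_zero, List.map_nil, List.prod_nil, Matrix.one_mul]
    congr 1
    funext t
    split_ifs <;> simp_all <;> omega
  | succ c ih =>
    rw [List.range_succ_eq_map, List.map_cons, List.prod_cons, List.map_map, Matrix.mul_assoc]
    have hfac : (fun t => QBmat m n (s + (c + 1) - t)) ∘ Nat.succ =
        fun t => QBmat m n (s + c - t) := by
      funext t
      simp only [Function.comp_apply]
      congr 1
      omega
    rw [hfac, ih, QBmat_mul_powCol m n (by omega) (by simp)]
    congr 1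
    funext t
    simp only [Function.update_apply]
    split_ifs <;> (try simp_all) <;> omega

lemma prod_Rmat_mul_powCol (s i : ℕ) {g : ℕ → Option ℕ} (hg : ∀ t, s < t → g t = none) :
    ((List.range i).map fun t => Rmat m n Ac (s + i - t)).prod * powCol m n g =
      powCol m n fun t => if t = s + i then g s else if s ≤ t then none else g t := by
  induction i with
  | zero =>
    rw [List.range_zero, List.map_nil, List.prod_nil, Matrix.one_mul]
    congr 1
    funext t
    rcases lt_trichotomy t s with h | rfl | h
    · simp [h.ne, not_le.mpr h]
    · simp
    · simp [hg t h, h.ne', h.le]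
  | succ i ih =>
    rw [List.range_succ_eq_map, List.map_cons, List.prod_cons, List.map_map, Matrix.mul_assoc]
    have hfac : (fun t => Rmat m n Ac (s + (i + 1) - t)) ∘ Nat.succ =
        fun t => Rmat m n Ac (s + i - t) := by
      funext t
      simp only [Function.comp_apply]
      congr 1
      omega
    rw [hfac, ih, Rmat_mul_powCol m n Ac (by omega) (by simp)]
    congr 1
    funext t
    simp only [Function.comp_apply, Equiv.swap_apply_def]
    split_ifs <;> simp_all

lemma Ufac_mul_powCol (s c i e : ℕ) {g : ℕ → Option ℕ}
    (hg : ∀ t, s ≤ t → g t = if t = s then some e else none) :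
    Ufac m n Ac s c i * powCol m n g =
      powCol m n fun t => if t < s then g t else if t < s + c then some (e + (t - s))
        else if t = s + c + i then some (e + c) else none := by
  rw [Ufac, Matrix.mul_assoc, prod_QBmat_mul_powCol m n s c e hg,
    prod_Rmat_mul_powCol m n Ac (s + c) i fun t ht => by
      simp [show ¬t < s by omega, show ¬t ≤ s + c by omega]]
  congr 1
  funext t
  split_ifs <;> (try simp_all) <;> omega

lemma Vfac_transpose (s c i : ℕ) :
    (Vfac m n Ac s c i)ᵀ =
      ((List.range i).map fun t => QBmat m n (s + c + i - t)).prod *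
        ((List.range c).map fun t => Rmat m n (fun k => (Ac k)ᵀ) (s + c - t)).prod := by
  simp only [Vfac, transpose_mul, transpose_prod_map_range, Qmat_transpose, Rmat_transpose]

lemma Vfac_transpose_mul_powCol (s c i e : ℕ) {g : ℕ → Option ℕ}
    (hg : ∀ t, s ≤ t → g t = if t = s then some e else none) :
    (Vfac m n Ac s c i)ᵀ * powCol m n g =
      powCol m n fun t => if t < s then g t else if t < s + c then none
        else if t ≤ s + c + i then some (e + (t - (s + c))) else none := by
  rw [Vfac_transpose, Matrix.mul_assoc,
    prod_Rmat_mul_powCol m n _ s c fun t ht => by simp [hg t ht.le, ht.ne'],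
    prod_QBmat_mul_powCol m n (s + c) i e fun t ht => by
      split_ifs <;> simp_all
      omega]
  congr 1
  funext t
  split_ifs <;> (try simp_all) <;> omega

lemma Uprod_mul_powCol (L : List (ℕ × ℕ)) (s e : ℕ) {g : ℕ → Option ℕ}
    (hg : ∀ t, s ≤ t → g t = if t = s then some e else none) :
    Uprod m n Ac L s * powCol m n g =
      powCol m n fun t => if t < s then g t else lamProfile L e (t - s) := by
  induction L generalizing s e g with
  | nil =>
    rw [Uprod, Matrix.one_mul]
    congr 1
    funext t
    split_ifs with h
    · rfl
    · have ht : t - s = 0 ↔ t = s := by omega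
      simp only [lamProfile, if_true, hg t (not_lt.mp h), ht]
  | cons ci L ih =>
    obtain ⟨c, i⟩ := ci
    rw [Uprod, Matrix.mul_assoc, Ufac_mul_powCol m n Ac s c i e hg,
      ih (s + c + i) (e + c) fun t ht => by split_ifs <;> (try simp_all) <;> omega]
    congr 1
    funext t
    simp only [lamProfile_cons]
    split_ifs <;> first | rfl | (exfalso; omega) | (congr 1; omega)

lemma Vprod_transpose_mul_powCol (L : List (ℕ × ℕ)) (s e : ℕ) {g : ℕ → Option ℕ}
    (hg : ∀ t, s ≤ t → g t = if t = s then some e else none) :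
    (Vprod m n Ac L s)ᵀ * powCol m n g =
      powCol m n fun t => if t < s then g t else omProfile L e (t - s) := by
  induction L generalizing s e g with
  | nil =>
    rw [Vprod, transpose_one, Matrix.one_mul]
    congr 1
    funext t
    split_ifs with h
    · rfl
    · have ht : t - s = 0 ↔ t = s := by omega
      simp only [omProfile, if_true, hg t (not_lt.mp h), ht]
  | cons ci L ih =>
    obtain ⟨c, i⟩ := ci
    rw [Vprod, transpose_mul, Matrix.mul_assoc, Vfac_transpose_mul_powCol m n Ac s c i e hg,
      ih (s + c + i) (e + i) fun t ht => by split_ifs <;> (try simp_all) <;> omega]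
    congr 1
    funext t
    simp only [omProfile_cons]
    split_ifs <;> first | rfl | (exfalso; omega) | (congr 1; omega)

lemma e1ColI_eq_powCol : e1ColI m n = powCol m n (lamProfile [] 0) := by
  ext p b
  by_cases h : (p.1 : ℕ) = 0 <;> simp [e1ColI, powCol, lamProfile, h]

lemma e1RowI_eq_transpose_powCol : e1RowI m n = (powCol m n (omProfile [] 0))ᵀ := by
  ext a q
  by_cases h : (q.1 : ℕ) = 0 <;> simp [e1RowI, powCol, omProfile, h, eq_comm]

lemma LamMat_eq_powCol {L : List (ℕ × ℕ)} (hL : L ≠ []) :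
    LamMat m n L = powCol m n (lamProfile L 0) := by
  ext p b
  simp only [LamMat, powCol, lamProfile, hL, of_apply, if_false]
  cases lamExp L 0 p.1 <;> simp

lemma OmMat_eq_transpose_powCol {L : List (ℕ × ℕ)} (hL : L ≠ []) :
    OmMat m n L = (powCol m n (omProfile L 0))ᵀ := by
  ext a q
  simp only [OmMat, powCol, omProfile, hL, of_apply, transpose_apply, if_false,
    eq_comm (a := a)]
  cases omExp L 0 q.1 <;> simp

end

theorem first_col_U_and_first_row_V_general
    (m n : ℕ)
    (Ac : ℕ → Matrix (Fin n) (Fin n) ℂ)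
    (L : List (ℕ × ℕ)) (hL : L ≠ []) :
    Uprod m n Ac L 0 * e1ColI m n = LamMat m n L ∧
    e1RowI m n * Vprod m n Ac L 0 = OmMat m n L := by
  constructor
  · rw [e1ColI_eq_powCol, LamMat_eq_powCol m n hL,
      Uprod_mul_powCol m n Ac L 0 0 fun t _ => by simp [lamProfile]]
    simp
  · apply transpose_injective
    rw [transpose_mul, e1RowI_eq_transpose_powCol, OmMat_eq_transpose_powCol m n hL,
      transpose_transpose, transpose_transpose,
      Vprod_transpose_mul_powCol m n Ac L 0 0 fun t _ => by simp [omProfile]]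
    simp

theorem first_col_U_and_first_row_V
    (m n : ℕ) (hm : 2 ≤ m) (hn : 0 < n)
    (Ac : ℕ → Matrix (Fin n) (Fin n) ℂ) (hAm : Ac m ≠ 0)
    (α : List ℤ) (hα : PermOn α 0 m)
    (L : List (ℕ × ℕ)) (hL : L ≠ []) (hRCISS : IsRCISS m α L) :
    Uprod m n Ac L 0 * e1ColI m n = LamMat m n L ∧
    e1RowI m n * Vprod m n Ac L 0 = OmMat m n L :=
  first_col_U_and_first_row_V_general m n Ac L hL

end RatLin
end
end

section
/- Let X(λ) := [x_1 x_2 ⋯ x_m]^B be an mn×n block-column matrix and Y(λ) := [y_1 y_2 ⋯ y_m] an n×mn block-row matrix, where each block x_i is either 0 or λ^{p_i} I_n and each y_i is either 0 or λ^{q_i} I_n for some integers p_i ≥ 0, q_i ≥ 0 (i = 1,…,m). Suppose x_i y_i = 0 for i = 1,…,m−1. Then there exist an m×m-block lower block-triangular matrix polynomial L(λ) with all diagonal blocks I_n and an m×m-block upper block-triangular matrix polynomial U(λ) with all diagonal blocks I_n such that L(λ) (diag(I_{(m−1)n}, 0_n) + X(λ)Y(λ)) U(λ) = diag(I_{(m−1)n},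 x_m y_m). -/
open Polynomial Matrix
open scoped Classical

set_option synthInstance.maxHeartbeats 1000000
set_option maxHeartbeats 1000000

noncomputable section

namespace Matrix

section StrictParts

variable {ι A : Type*} [LinearOrder ι]

def strictLowerPart [Zero A] (M : Matrix ι ι A) : Matrix ι ι A :=
  of fun i j => if j < i then M i j else 0

def strictUpperPart [Zero A] (M : Matrix ι ι A) : Matrix ι ι A :=
  of fun i j => if i < j then M i j else 0

theorem strictLowerPart_add_diagonal_diag_add_strictUpperPart [AddZeroClass A]
    (M : Matrix ι ι A) :
    strictLowerPart M + diagonal (diag M) + strictUpperPart M = M := by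
  ext i j
  rcases lt_trichotomy i j with h | rfl | h
  · simp [strictLowerPart, strictUpperPart, h, h.ne, h.not_gt]
  · simp [strictLowerPart, strictUpperPart]
  · simp [strictLowerPart, strictUpperPart, h, h.ne', h.not_gt]

variable [Fintype ι] [Ring A]

theorem strictLowerPart_mul_diagonal {e : ι → A} (he : ∀ k i, k < i → e k = 1)
    (M : Matrix ι ι A) : strictLowerPart M * diagonal e = strictLowerPart M := by
  ext i j
  by_cases h : j < i <;> simp [strictLowerPart, h, he j i]

theorem diagonal_mul_strictUpperPart {e : ι → A} (he : ∀ k i, k < i → e k = 1)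
    (M : Matrix ι ι A) : diagonal e * strictUpperPart M = strictUpperPart M := by
  ext i j
  by_cases h : i < j <;> simp [strictUpperPart, h, he i j]

variable {c d : ι → A} (hdc : ∀ k i, k < i → d k * c k = 0)
include hdc

theorem strictLowerPart_vecMulVec_mul_vecMulVec :
    strictLowerPart (vecMulVec c d) * vecMulVec c d = 0 := by
  ext i j
  refine Finset.sum_eq_zero fun k _ => ?_
  by_cases h : k < i
  · simp [strictLowerPart, vecMulVec, h, mul_assoc, ← mul_assoc (d k), hdc k i h]
  · simp [strictLowerPart, h]

theorem vecMulVec_mul_strictUpperPart_vecMulVec :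
    vecMulVec c d * strictUpperPart (vecMulVec c d) = 0 := by
  ext i j
  refine Finset.sum_eq_zero fun k _ => ?_
  by_cases h : k < j
  · simp [strictUpperPart, vecMulVec, h, mul_assoc, ← mul_assoc (d k), hdc k j h]
  · simp [strictUpperPart, h]

theorem strictLowerPart_vecMulVec_mul_strictUpperPart_vecMulVec :
    strictLowerPart (vecMulVec c d) * strictUpperPart (vecMulVec c d) = 0 := by
  ext i j
  refine Finset.sum_eq_zero fun k _ => ?_
  by_cases h : k < i
  · by_cases h' : k < j
    · simp [strictLowerPart, strictUpperPart, vecMulVec, h, h', mul_assoc, ← mul_assoc (d k),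
        hdc k i h]
    · simp [strictUpperPart, h']
  · simp [strictLowerPart, h]

theorem one_sub_strictLowerPart_mul_mul_one_sub_strictUpperPart {e : ι → A}
    (he : ∀ k i, k < i → e k = 1) :
    (1 - strictLowerPart (vecMulVec c d)) * (diagonal e + vecMulVec c d) *
        (1 - strictUpperPart (vecMulVec c d)) =
      diagonal fun i => e i + c i * d i := by
  set S := strictLowerPart (vecMulVec c d)
  set T := strictUpperPart (vecMulVec c d)
  have hSM : S * (diagonal e + vecMulVec c d) = S := by
    rw [mul_add, strictLowerPart_mul_diagonal he, strictLowerPart_vecMulVec_mul_vecMulVec hdc,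
      add_zero]
  have hMT : (diagonal e + vecMulVec c d) * T = T := by
    rw [add_mul, diagonal_mul_strictUpperPart he, vecMulVec_mul_strictUpperPart_vecMulVec hdc,
      add_zero]
  have hV : S + diagonal (fun i => c i * d i) + T = vecMulVec c d :=
    strictLowerPart_add_diagonal_diag_add_strictUpperPart _
  calc (1 - S) * (diagonal e + vecMulVec c d) * (1 - T)
      = diagonal e + vecMulVec c d - S * (diagonal e + vecMulVec c d)
          - (diagonal e + vecMulVec c d) * T + S * (diagonal e + vecMulVec c d) * T := by
        noncomm_ring
    _ = diagonal e + (vecMulVec c d - S - T) := by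
        rw [hSM, hMT, strictLowerPart_vecMulVec_mul_strictUpperPart_vecMulVec hdc]
        abel
    _ = diagonal fun i => e i + c i * d i := by
        rw [← hV, ← diagonal_add]
        abel

end StrictParts

end Matrix

namespace RatLin

section BlockMatrices

variable {m n : ℕ}

theorem blockLowerUni_compRingEquiv_one_sub_strictLowerPart
    (N : Matrix (Fin m) (Fin m) (Matrix (Fin n) (Fin n) ℂ[X])) :
    BlockLowerUni m n (compRingEquiv (Fin m) (Fin n) ℂ[X] (1 - N.strictLowerPart)) := by
  constructor
  · intro p q h
    simp [strictLowerPart, h.ne, h.not_gt]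
  · intro p q h
    simp [strictLowerPart, h, one_apply]

theorem blockUpperUni_compRingEquiv_one_sub_strictUpperPart
    (N : Matrix (Fin m) (Fin m) (Matrix (Fin n) (Fin n) ℂ[X])) :
    BlockUpperUni m n (compRingEquiv (Fin m) (Fin n) ℂ[X] (1 - N.strictUpperPart)) := by
  constructor
  · intro p q h
    simp [strictUpperPart, h.ne', h.not_gt]
  · intro p q h
    simp [strictUpperPart, h, one_apply]

theorem diagZeroLast_eq_compRingEquiv :
    diagZeroLast m n = compRingEquiv (Fin m) (Fin n) ℂ[X]
      (diagonal fun i => if (i : ℕ) = m - 1 then 0 else 1) := by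
  ext ⟨i, a⟩ ⟨j, b⟩
  by_cases hij : i = j
  · subst hij
    by_cases hi : (i : ℕ) = m - 1 <;> simp [diagZeroLast, hi, one_apply]
  · simp [diagZeroLast, hij]

theorem diagLastP_eq_compRingEquiv (W : Matrix (Fin n) (Fin n) ℂ[X]) :
    diagLastP m n W = compRingEquiv (Fin m) (Fin n) ℂ[X]
      (diagonal fun i => if (i : ℕ) = m - 1 then W else 1) := by
  ext ⟨i, a⟩ ⟨j, b⟩
  by_cases hij : i = j
  · subst hij
    by_cases hi : (i : ℕ) = m - 1 <;> simp [diagLastP, hi, one_apply]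
  · have : ¬ ((i : ℕ) = m - 1 ∧ (j : ℕ) = m - 1) := fun h => hij (Fin.ext (h.1.trans h.2.symm))
    simp [diagLastP, hij, this]

end BlockMatrices

theorem block_elimination
    (m n : ℕ) (hm : 0 < m)
    (x y : Fin m → Matrix (Fin n) (Fin n) ℂ[X])
    (hx : ∀ i, x i = 0 ∨ ∃ p : ℕ, x i = (X : ℂ[X]) ^ p • (1 : Matrix (Fin n) (Fin n) ℂ[X]))
    (hxy : ∀ i : Fin m, (i : ℕ) < m - 1 → x i * y i = 0) :
    ∃ L U : Matrix (BI m n) (BI m n) ℂ[X],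
      BlockLowerUni m n L ∧ BlockUpperUni m n U ∧
      L * (diagZeroLast m n + Matrix.of fun p q => (x p.1 * y q.1) p.2 q.2) * U =
        diagLastP m n (x ⟨m - 1, by omega⟩ * y ⟨m - 1, by omega⟩) := by
  have hyx : ∀ k i : Fin m, k < i → y k * x k = 0 := by
    intro k i hki
    have hcomm : Commute (x k) (y k) := by
      rcases hx k with h | ⟨p, h⟩ <;> rw [h]
      · exact Commute.zero_left _
      · exact (Commute.one_left _).smul_left _
    rw [← hcomm.eq]
    exact hxy k (by omega)
  have he : ∀ k i : Fin m, k < i →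
      (if (k : ℕ) = m - 1 then 0 else 1 : Matrix (Fin n) (Fin n) ℂ[X]) = 1 :=
    fun k i hki => if_neg (by omega)
  refine ⟨_, _, blockLowerUni_compRingEquiv_one_sub_strictLowerPart (vecMulVec x y),
    blockUpperUni_compRingEquiv_one_sub_strictUpperPart (vecMulVec x y), ?_⟩
  rw [diagZeroLast_eq_compRingEquiv, diagLastP_eq_compRingEquiv,
    show (of fun p q => (x p.1 * y q.1) p.2 q.2) =
      compRingEquiv (Fin m) (Fin n) ℂ[X] (vecMulVec x y) from rfl,
    ← map_add, ← map_mul, ← map_mul,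
    one_sub_strictLowerPart_mul_mul_one_sub_strictUpperPart hyx he]
  congr 2
  funext i
  split_ifs with hi
  · rw [zero_add, show i = ⟨m - 1, by omega⟩ from Fin.ext hi]
  · rw [hxy i (by omega), add_zero]

end RatLin
end
end

section
/- Let α be a permutation of {0,…,m−1} with RCISS(α) = (c_1,i_1,…,c_ℓ,i_ℓ), and let Λ_α(λ) and Ω_α(λ) be the associated mn×n and n×mn matrix polynomials. Then there exist an m×m-block lower block-triangular matrix polynomial T_1(λ) with all diagonal blocks I_n and an m×m-block upper block-triangular matrix polynomial T_2(λ) with all diagonal blocks I_n such that T_1(λ) (diag(I_{(m−1)n}, 0_n) + Λ_α(λ) Ω_α(λ)) T_2(λ) = diag(I_{(m−1)n}, λ^{m−1} I_n). -/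
open Polynomial Matrix
open scoped Classical

set_option synthInstance.maxHeartbeats 1000000
set_option maxHeartbeats 1000000

noncomputable section

namespace RatLin

/-!
Both `Λ_α` and `Ω_α` are Kronecker products with `I_n`: `Λ_α = u ⊗ I_n` and `Ω_α = vᵀ ⊗ I_n`,
where `u` and `v` have entries `0` or a power of `λ`. Since the zero patterns of `u` and `v`
interlace, `u r * v r = 0` except in the last block, where it is `λ^(m-1)`. Hence the problem is
scalar: subtracting the strictly lower part of `u vᵀ` on the left and its strictly upper part on
the right clears `diag(1, …, 1, 0) + u vᵀ` to `diag(1, …, 1, λ^(m-1))`, because every cross term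
`u p v r · u r v q` with `r` not the last index vanishes.
-/

open scoped Kronecker

section TriangularParts

variable {ι R : Type*} [LinearOrder ι] [CommRing R]

def strictLowerPart (M : Matrix ι ι R) : Matrix ι ι R :=
  Matrix.of fun i j => if j < i then M i j else 0

def strictUpperPart (M : Matrix ι ι R) : Matrix ι ι R :=
  Matrix.of fun i j => if i < j then M i j else 0

theorem strictLowerPart_add_diagonal_add_strictUpperPart (M : Matrix ι ι R) :
    strictLowerPart M + diagonal M.diag + strictUpperPart M = M := by
  ext i j
  rcases lt_trichotomy i j with h | rfl | h
  · simp [strictLowerPart, strictUpperPart, h, h.ne, not_lt_of_gt h]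
  · simp [strictLowerPart, strictUpperPart]
  · simp [strictLowerPart, strictUpperPart, h, h.ne', not_lt_of_gt h]

theorem one_sub_strictLowerPart_apply_of_lt (M : Matrix ι ι R) {i j : ι} (h : i < j) :
    (1 - strictLowerPart M) i j = 0 := by
  simp [strictLowerPart, h.ne, not_lt_of_gt h]

theorem one_sub_strictUpperPart_apply_of_lt (M : Matrix ι ι R) {i j : ι} (h : j < i) :
    (1 - strictUpperPart M) i j = 0 := by
  simp [strictUpperPart, h.ne', not_lt_of_gt h]

theorem one_sub_strictLowerPart_apply_self (M : Matrix ι ι R) (i : ι) :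
    (1 - strictLowerPart M) i i = 1 := by
  simp [strictLowerPart]

theorem one_sub_strictUpperPart_apply_self (M : Matrix ι ι R) (i : ι) :
    (1 - strictUpperPart M) i i = 1 := by
  simp [strictUpperPart]

variable [Fintype ι]

theorem strictLowerPart_mul_diagonal {d : ι → R} (hd : ∀ r p, r < p → d r = 1)
    (M : Matrix ι ι R) : strictLowerPart M * diagonal d = strictLowerPart M := by
  ext i j
  simp only [mul_diagonal, strictLowerPart, of_apply]
  split_ifs with h
  · rw [hd j i h, mul_one]
  · rw [zero_mul]

theorem diagonal_mul_strictUpperPart {d : ι → R} (hd : ∀ r p, r < p → d r = 1)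
    (M : Matrix ι ι R) : diagonal d * strictUpperPart M = strictUpperPart M := by
  ext i j
  simp only [diagonal_mul, strictUpperPart, of_apply]
  split_ifs with h
  · rw [hd i j h, one_mul]
  · rw [mul_zero]

variable {u v : ι → R} (huv : ∀ r p, r < p → u r * v r = 0)
include huv

theorem strictLowerPart_vecMulVec_mul_vecMulVec :
    strictLowerPart (vecMulVec u v) * vecMulVec u v = 0 := by
  ext p q
  refine Finset.sum_eq_zero fun r _ => ?_
  simp only [strictLowerPart, of_apply, vecMulVec_apply]
  split_ifs with h
  · linear_combination u p * v q * huv r p h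
  · rw [zero_mul]

theorem vecMulVec_mul_strictUpperPart_vecMulVec :
    vecMulVec u v * strictUpperPart (vecMulVec u v) = 0 := by
  ext p q
  refine Finset.sum_eq_zero fun r _ => ?_
  simp only [strictUpperPart, of_apply, vecMulVec_apply]
  split_ifs with h
  · linear_combination u p * v q * huv r q h
  · rw [mul_zero]

theorem strictLowerPart_vecMulVec_mul_strictUpperPart_vecMulVec :
    strictLowerPart (vecMulVec u v) * strictUpperPart (vecMulVec u v) = 0 := by
  ext p q
  refine Finset.sum_eq_zero fun r _ => ?_
  simp only [strictLowerPart, strictUpperPart, of_apply, vecMulVec_apply]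
  split_ifs with h
  · linear_combination u p * v q * huv r p h
  all_goals simp

theorem one_sub_strictLowerPart_mul_mul_one_sub_strictUpperPart {d : ι → R}
    (hd : ∀ r p, r < p → d r = 1) :
    (1 - strictLowerPart (vecMulVec u v)) * (diagonal d + vecMulVec u v) *
        (1 - strictUpperPart (vecMulVec u v)) = diagonal (d + u * v) := by
  set A := strictLowerPart (vecMulVec u v)
  set B := strictUpperPart (vecMulVec u v)
  have hA : A * (diagonal d + vecMulVec u v) = A := by
    rw [mul_add, strictLowerPart_mul_diagonal hd,
      strictLowerPart_vecMulVec_mul_vecMulVec huv, add_zero]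
  have hB : (diagonal d + vecMulVec u v) * B = B := by
    rw [add_mul, diagonal_mul_strictUpperPart hd,
      vecMulVec_mul_strictUpperPart_vecMulVec huv, add_zero]
  have hAB : A * B = 0 := strictLowerPart_vecMulVec_mul_strictUpperPart_vecMulVec huv
  calc (1 - A) * (diagonal d + vecMulVec u v) * (1 - B)
      = diagonal d + vecMulVec u v - A * (diagonal d + vecMulVec u v)
          - (diagonal d + vecMulVec u v) * B + A * (diagonal d + vecMulVec u v) * B := by
        noncomm_ring
    _ = diagonal d + (vecMulVec u v - A - B) := by rw [hA, hB, hAB]; abel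
    _ = diagonal d + diagonal (vecMulVec u v).diag := by
        conv_lhs => rw [← strictLowerPart_add_diagonal_add_strictUpperPart (vecMulVec u v)]
        abel
    _ = diagonal (d + u * v) := diagonal_add _ _

end TriangularParts

def powOrZero (o : Option ℕ) : ℂ[X] := o.elim 0 (X ^ ·)

/-- Each pair `(c, i)` gives `c` block rows of `Λ_α` followed by `i` block columns of `Ω_α`,
so only the final position `c₁ + i₁ + ⋯ + c_ℓ + i_ℓ` is nonzero in both. -/
theorem powOrZero_lamExp_mul_powOrZero_omExp :
    ∀ (L : List (ℕ × ℕ)), L ≠ [] → ∀ a b p, p ≤ (L.map fun s => s.1 + s.2).sum →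
      powOrZero (lamExp L a p) * powOrZero (omExp L b p) =
        if p = (L.map fun s => s.1 + s.2).sum then
          (X : ℂ[X]) ^ (a + b + (L.map fun s => s.1 + s.2).sum) else 0
  | [], hL, _, _, _, _ => absurd rfl hL
  | [(c, i)], _, a, b, p, hp => by
      simp only [List.map_cons, List.map_nil, List.sum_cons, List.sum_nil, add_zero] at hp ⊢
      simp only [lamExp, omExp]
      by_cases hc : p < c
      · rw [if_pos hc, if_pos hc, if_neg (by omega)]
        exact mul_zero _
      · by_cases hci : p = c + i
        · simp only [if_neg hc, if_pos hci, if_neg (by omega : ¬p < c + i)]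
          simp only [powOrZero, Option.elim, ← pow_add]
          ring_nf
        · simp only [if_neg hc, if_neg hci]
          exact zero_mul _
  | (c, i) :: s :: rest, _, a, b, p, hp => by
      have ih := powOrZero_lamExp_mul_powOrZero_omExp (s :: rest) (List.cons_ne_nil _ _)
        (a + c) (b + i) (p - (c + i))
      simp only [List.map_cons, List.sum_cons] at hp ih ⊢
      generalize s.1 + s.2 + (rest.map fun s => s.1 + s.2).sum = T at hp ih ⊢
      rw [lamExp.eq_3 _ _ _ _ _ (List.cons_ne_nil _ _),
        omExp.eq_3 _ _ _ _ _ (List.cons_ne_nil _ _)]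
      by_cases hc : p < c
      · rw [if_pos hc, if_pos hc, if_neg (by omega)]
        exact mul_zero _
      · by_cases hci : p < c + i
        · simp only [if_neg hc, if_pos hci, if_neg (by omega : p ≠ c + i + T)]
          exact zero_mul _
        · rw [if_neg hc, if_neg hci, if_neg hc, if_neg hci, ih (by omega)]
          by_cases hT : p = c + i + T
          · rw [if_pos (by omega), if_pos hT]
            ring_nf
          · rw [if_neg (by omega), if_neg hT]

def lamVec (m : ℕ) (L : List (ℕ × ℕ)) : Fin m → ℂ[X] := fun p => powOrZero (lamExp L 0 p)

def omVec (m : ℕ) (L : List (ℕ × ℕ)) : Fin m → ℂ[X] := fun q => powOrZero (omExp L 0 q)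

theorem lamVec_mul_omVec {m : ℕ} {L : List (ℕ × ℕ)} (hL : L ≠ [])
    (hsum : (L.map fun s => s.1 + s.2).sum = m - 1) (r : Fin m) :
    lamVec m L r * omVec m L r = if (r : ℕ) = m - 1 then (X : ℂ[X]) ^ (m - 1) else 0 := by
  have h := powOrZero_lamExp_mul_powOrZero_omExp L hL 0 0 r (by omega)
  rwa [hsum, zero_add, zero_add] at h

theorem lamMat_apply (m n : ℕ) (L : List (ℕ × ℕ)) (p : BI m n) (b : Fin n) :
    LamMat m n L p b = if p.2 = b then lamVec m L p.1 else 0 := by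
  simp only [LamMat, lamVec, of_apply]
  cases lamExp L 0 p.1 <;> simp [powOrZero]

theorem omMat_apply (m n : ℕ) (L : List (ℕ × ℕ)) (a : Fin n) (q : BI m n) :
    OmMat m n L a q = if a = q.2 then omVec m L q.1 else 0 := by
  simp only [OmMat, omVec, of_apply]
  cases omExp L 0 q.1 <;> simp [powOrZero]

theorem lamMat_mul_omMat (m n : ℕ) (L : List (ℕ × ℕ)) :
    LamMat m n L * OmMat m n L = vecMulVec (lamVec m L) (omVec m L) ⊗ₖ 1 := by
  ext p q : 1
  simp [mul_apply, lamMat_apply, omMat_apply, kroneckerMap_apply, one_apply, vecMulVec_apply]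

def lastDiag (m : ℕ) (a : ℂ[X]) : Fin m → ℂ[X] := fun r => if (r : ℕ) = m - 1 then a else 1

theorem diagZeroLast_eq_kronecker (m n : ℕ) :
    diagZeroLast m n = diagonal (lastDiag m 0) ⊗ₖ 1 := by
  ext p q : 1
  by_cases h : p.1 = q.1 <;> by_cases h' : p.2 = q.2 <;>
    simp [diagZeroLast, lastDiag, kroneckerMap_apply, one_apply, Prod.ext_iff, h, h']

theorem diagLastP_smul_one_eq_kronecker (m n : ℕ) (a : ℂ[X]) :
    diagLastP m n (a • 1) = diagonal (lastDiag m a) ⊗ₖ 1 := by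
  ext p q : 1
  by_cases h : p.1 = q.1 <;> by_cases h' : p.2 = q.2 <;>
    simp [diagLastP, lastDiag, kroneckerMap_apply, one_apply, Prod.ext_iff, h, h']
  exact fun hp hq => absurd (Fin.ext (hp.trans hq.symm)) h

theorem blockLowerUni_kronecker_one {m n : ℕ} {M : Matrix (Fin m) (Fin m) ℂ[X]}
    (hM : ∀ i j, i < j → M i j = 0) (hdiag : ∀ i, M i i = 1) :
    BlockLowerUni m n (M ⊗ₖ 1) := by
  refine ⟨fun p q h => ?_, fun p q h => ?_⟩
  · rw [kroneckerMap_apply, hM _ _ h, zero_mul]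
  · rw [kroneckerMap_apply, h, hdiag, one_mul, one_apply]

theorem blockUpperUni_kronecker_one {m n : ℕ} {M : Matrix (Fin m) (Fin m) ℂ[X]}
    (hM : ∀ i j, j < i → M i j = 0) (hdiag : ∀ i, M i i = 1) :
    BlockUpperUni m n (M ⊗ₖ 1) := by
  refine ⟨fun p q h => ?_, fun p q h => ?_⟩
  · rw [kroneckerMap_apply, hM _ _ h, zero_mul]
  · rw [kroneckerMap_apply, h, hdiag, one_mul, one_apply]

theorem lambda_omega_elimination_general
    (m n : ℕ)
    (α : List ℤ)
    (L : List (ℕ × ℕ)) (hL : L ≠ []) (hRCISS : IsRCISS m α L) :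
    ∃ T1 T2 : Matrix (BI m n) (BI m n) ℂ[X],
      BlockLowerUni m n T1 ∧ BlockUpperUni m n T2 ∧
      T1 * (diagZeroLast m n + LamMat m n L * OmMat m n L) * T2 =
        diagLastP m n ((X : ℂ[X]) ^ (m - 1) • (1 : Matrix (Fin n) (Fin n) ℂ[X])) := by
  set W := vecMulVec (lamVec m L) (omVec m L)
  have huv := lamVec_mul_omVec hL hRCISS.1
  have hlast : ∀ r p : Fin m, r < p → (r : ℕ) ≠ m - 1 := fun r p h => by omega
  have hd : ∀ r p : Fin m, r < p → lastDiag m 0 r = 1 := fun r p h => if_neg (hlast r p h)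
  have hW : ∀ r p : Fin m, r < p → lamVec m L r * omVec m L r = 0 := fun r p h => by
    rw [huv, if_neg (hlast r p h)]
  have hdiag : lastDiag m 0 + lamVec m L * omVec m L = lastDiag m (X ^ (m - 1)) := by
    ext1 r
    by_cases hr : (r : ℕ) = m - 1 <;> simp [lastDiag, huv, hr]
  refine ⟨(1 - strictLowerPart W) ⊗ₖ 1, (1 - strictUpperPart W) ⊗ₖ 1,
    blockLowerUni_kronecker_one (fun _ _ => one_sub_strictLowerPart_apply_of_lt W)
      (one_sub_strictLowerPart_apply_self W),
    blockUpperUni_kronecker_one (fun _ _ => one_sub_strictUpperPart_apply_of_lt W)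
      (one_sub_strictUpperPart_apply_self W), ?_⟩
  rw [diagZeroLast_eq_kronecker, lamMat_mul_omMat, diagLastP_smul_one_eq_kronecker,
    ← add_kronecker, ← mul_kronecker_mul, ← mul_kronecker_mul, one_mul, one_mul,
    one_sub_strictLowerPart_mul_mul_one_sub_strictUpperPart hW hd, hdiag]

theorem lambda_omega_elimination
    (m n : ℕ) (hm : 2 ≤ m) (hn : 0 < n)
    (α : List ℤ) (hα : PermOn α 0 m)
    (L : List (ℕ × ℕ)) (hL : L ≠ []) (hRCISS : IsRCISS m α L) :
    ∃ T1 T2 : Matrix (BI m n) (BI m n) ℂ[X],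
      BlockLowerUni m n T1 ∧ BlockUpperUni m n T2 ∧
      T1 * (diagZeroLast m n + LamMat m n L * OmMat m n L) * T2 =
        diagLastP m n ((X : ℂ[X]) ^ (m - 1) • (1 : Matrix (Fin n) (Fin n) ℂ[X])) :=
  lambda_omega_elimination_general m n α L hL hRCISS

end RatLin
end
end

section
/- Let r = 2ℓ, let A ∈ ℂ^{r×r} be Hamiltonian (i.e., (JA)^T = JA) and let B ∈ ℂ^{r×n}. Then: (i) (AJ)^T = AJ; (ii) the pencil λJ − AJ is T-even, i.e., (−λJ − AJ)^T = λJ − AJ for all λ; and (iii) B^T J^T (λI_r − A)^{-1} B = B^T (λJ − AJ)^{-1} B for every λ ∈ ℂ that is not an eigenvalue of A. Consequently, if G(λ) = P(λ) + B^T J^T (λI_r − A)^{-1} B with P(λ) a T-even matrix polynomial, then G(λ) = P(λ) + B^T (λE − A')^{-1} B with E := J and A' := AJ is a realization in which P(λ) and λE − A' are both T-even and E is nonsingular. -/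
open Polynomial Matrix
open scoped Classical

set_option synthInstance.maxHeartbeats 1000000
set_option maxHeartbeats 1000000

noncomputable section

namespace RatLin

/-! The symplectic matrix `J` is orthogonal and skew, `Jᵀ = J⁻¹ = -J`. Hence `AJ = Jᵀ (JA) J` is
congruent to the symmetric matrix `JA`, and `λJ - AJ = (λI - A) J` has inverse
`J⁻¹ (λI - A)⁻¹ = Jᵀ (λI - A)⁻¹`. -/

section Congruence

variable {ι R : Type*} [CommRing R] {J A : Matrix ι ι R}

theorem transpose_neg_smul_sub_eq (hJ : Jᵀ = -J) (hA : Aᵀ = A) (lam : R) :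
    ((-lam) • J - A)ᵀ = lam • J - A := by
  rw [transpose_sub, transpose_smul, hJ, hA, smul_neg, neg_smul, neg_neg]

variable [Fintype ι] [DecidableEq ι]

theorem transpose_mul_eq_of_transpose_mul_eq (hJ : Jᵀ * J = 1) (hA : (J * A)ᵀ = J * A) :
    (A * J)ᵀ = A * J := by
  have hconj : A * J = Jᵀ * (J * A) * J := by rw [← mul_assoc, hJ, one_mul]
  rw [hconj, transpose_mul, transpose_mul Jᵀ, hA, transpose_transpose]
  simp only [Matrix.mul_assoc]

theorem inv_smul_sub_mul (lam : R) : (lam • J - A * J)⁻¹ = J⁻¹ * (lam • 1 - A)⁻¹ := by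
  rw [← Matrix.mul_inv_rev, sub_mul, smul_mul, one_mul]

end Congruence

theorem Jmat_transpose (l : ℕ) : (Jmat l)ᵀ = -Jmat l := by
  simp [Jmat, fromBlocks_transpose, fromBlocks_neg]

theorem transpose_Jmat_mul_Jmat (l : ℕ) : (Jmat l)ᵀ * Jmat l = 1 := by
  simp [Jmat, fromBlocks_transpose, fromBlocks_multiply, ← fromBlocks_one]

theorem Jmat_mul_transpose_Jmat (l : ℕ) : Jmat l * (Jmat l)ᵀ = 1 :=
  mul_eq_one_comm.mp (transpose_Jmat_mul_Jmat l)

theorem inv_Jmat (l : ℕ) : (Jmat l)⁻¹ = (Jmat l)ᵀ :=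
  inv_eq_right_inv (Jmat_mul_transpose_Jmat l)

theorem isUnit_Jmat (l : ℕ) : IsUnit (Jmat l) :=
  ⟨⟨Jmat l, (Jmat l)ᵀ, Jmat_mul_transpose_Jmat l, transpose_Jmat_mul_Jmat l⟩, rfl⟩

theorem hamiltonian_to_Teven_realization
    (l n : ℕ)
    (A : Matrix (Fin l ⊕ Fin l) (Fin l ⊕ Fin l) ℂ)
    (B : Matrix (Fin l ⊕ Fin l) (Fin n) ℂ)
    -- `A` is Hamiltonian: `(JA)ᵀ = JA`
    (hA : (Jmat l * A)ᵀ = Jmat l * A) :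
    -- (i) `(AJ)ᵀ = AJ`
    (A * Jmat l)ᵀ = A * Jmat l ∧
    -- (ii) the pencil `λJ - AJ` is `T`-even: `(-λJ - AJ)ᵀ = λJ - AJ`
    (∀ lam : ℂ, ((-lam) • Jmat l - A * Jmat l)ᵀ = lam • Jmat l - A * Jmat l) ∧
    -- (iii) equality of the strictly proper parts away from the eigenvalues of `A`
    (∀ lam : ℂ, (lam • (1 : Matrix (Fin l ⊕ Fin l) (Fin l ⊕ Fin l) ℂ) - A).det ≠ 0 →
      Bᵀ * (Jmat l)ᵀ * (lam • (1 : Matrix (Fin l ⊕ Fin l) (Fin l ⊕ Fin l) ℂ) - A)⁻¹ * B =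
        Bᵀ * (lam • Jmat l - A * Jmat l)⁻¹ * B) ∧
    -- consequently: `E := J` is nonsingular, `λE - A'` with `A' := AJ` is `T`-even, and
    -- for `T`-even `P(λ)` the two realizations define the same rational matrix `G(λ)`
    IsUnit (Jmat l) ∧
    (∀ (mdeg : ℕ) (Ac : ℕ → Matrix (Fin n) (Fin n) ℂ),
      TEvenP (polyPartC mdeg n Ac) →
      ∀ lam : ℂ, (lam • (1 : Matrix (Fin l ⊕ Fin l) (Fin l ⊕ Fin l) ℂ) - A).det ≠ 0 →
        Gpt mdeg n Ac 1 A (Bᵀ * (Jmat l)ᵀ) B lam =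
          Gpt mdeg n Ac (Jmat l) (A * Jmat l) Bᵀ B lam) := by
  have hAJ : (A * Jmat l)ᵀ = A * Jmat l :=
    transpose_mul_eq_of_transpose_mul_eq (transpose_Jmat_mul_Jmat l) hA
  have hresolvent : ∀ lam : ℂ,
      Bᵀ * (Jmat l)ᵀ * (lam • (1 : Matrix (Fin l ⊕ Fin l) (Fin l ⊕ Fin l) ℂ) - A)⁻¹ * B =
        Bᵀ * (lam • Jmat l - A * Jmat l)⁻¹ * B := fun lam => by
    rw [inv_smul_sub_mul, inv_Jmat, Matrix.mul_assoc Bᵀ]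
  refine ⟨hAJ, transpose_neg_smul_sub_eq (Jmat_transpose l) hAJ, fun lam _ => hresolvent lam,
    isUnit_Jmat l, fun mdeg Ac _ lam _ => ?_⟩
  rw [Gpt, Gpt, hresolvent]

end RatLin
end
end
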